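/- For m ≥ 3 let u₀ : B → (0,∞) be continuous, and consider the metric g = u(x,y,z)^{4/(m−2)}·(dx² + φ*g^B + x²g^F) where u(x,y,z) = u₀(y) + O(x) as x → 0. Then under the change of radial variable x̃ = u₀(y)^{2/(m−2)}·x, one has u^{4/(m−2)}·(dx² + φ*g^B + x²g^F) = dx̃² + φ*(u₀^{4/(m−2)}·g^B) + x̃²·g^F + O(x), i.e., the conformally transformed metric is again an incomplete edge metric with base metric u₀^{4/(m−2)}g^B and the same fiber metric g^F. -/

import Mathlib

/-!
Writing `p = 4/(m-2)`, the rescaling `x̃ = u₀^{p/2} x` turns the model metric into exactly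
`u₀^p (dx² + φ*g^B + x² g^F)`, so the error is `(u^p - u₀^p)(dx² + φ*g^B + x² g^F)`.
Since `u` and `u₀` take values in a compact interval `[c₁, c₂] ⊂ (0, ∞)` on which `t ↦ t^p` is
Lipschitz, `|u^p - u₀^p| ≲ |u - u₀| = O(x)`.
-/

open Set

lemma Real.exists_lipschitzOnWith_rpow_const_Icc {a : ℝ} (ha : 0 < a) (b p : ℝ) :
    ∃ K, LipschitzOnWith K (fun t : ℝ => t ^ p) (Icc a b) := by
  have hdiff : ContDiffOn ℝ 1 (fun t : ℝ => t ^ p) (Icc a b) := fun t ht =>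
    (Real.contDiffAt_rpow_const_of_ne (ha.trans_le ht.1).ne').contDiffWithinAt
  exact hdiff.exists_lipschitzOnWith one_ne_zero (convex_Icc a b) isCompact_Icc

lemma rescaled_edge_form_eq {w : ℝ} (hw : 0 ≤ w) (s x vx qB qF : ℝ) :
    (w ^ s * vx) ^ 2 + w ^ (2 * s) * qB + (w ^ s * x) ^ 2 * qF =
      w ^ (2 * s) * (vx ^ 2 + qB + x ^ 2 * qF) := by
  have hsq : (w ^ s) ^ 2 = w ^ (2 * s) := by
    rw [← Real.rpow_mul_natCast hw, mul_comm]
    norm_num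
  rw [mul_pow, mul_pow, hsq]
  ring

lemma edge_form_le {x vx qB qF : ℝ} (hx : x ∈ Icc (0 : ℝ) 1) (hqB : 0 ≤ qB) (hqF : 0 ≤ qF) :
    |vx ^ 2 + qB + x ^ 2 * qF| ≤ vx ^ 2 + qB + qF := by
  have hx2 : x ^ 2 ≤ 1 := pow_le_one₀ hx.1 hx.2
  rw [abs_of_nonneg (by positivity)]
  nlinarith

theorem stmt_19_general {B F : Type*} (m : ℝ)
    (u₀ : B → ℝ) (u : ℝ → B → F → ℝ) (c₁ c₂ : ℝ) (hc₁ : 0 < c₁)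
    (hu₀ : ∀ y, c₁ ≤ u₀ y ∧ u₀ y ≤ c₂)
    (hu : ∀ x ∈ Set.Icc (0:ℝ) 1, ∀ y z, c₁ ≤ u x y z ∧ u x y z ≤ c₂)
    (Cexp : ℝ)
    (hexp : ∀ x ∈ Set.Icc (0:ℝ) 1, ∀ y z, |u x y z - u₀ y| ≤ Cexp * x) :
    ∃ C' : ℝ, ∀ x ∈ Set.Icc (0:ℝ) 1, ∀ y z, ∀ vx qB qF : ℝ,
      0 ≤ qB → 0 ≤ qF →
      |u x y z ^ (4 / (m - 2)) * (vx ^ 2 + qB + x ^ 2 * qF) -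
        ((u₀ y ^ (2 / (m - 2)) * vx) ^ 2 + u₀ y ^ (4 / (m - 2)) * qB +
          (u₀ y ^ (2 / (m - 2)) * x) ^ 2 * qF)| ≤
        C' * x * (vx ^ 2 + qB + qF) := by
  obtain ⟨K, hK⟩ := Real.exists_lipschitzOnWith_rpow_const_Icc hc₁ c₂ (4 / (m - 2))
  refine ⟨K * Cexp, fun x hx y z vx qB qF hqB hqF => ?_⟩
  have hp : (4 / (m - 2)) = 2 * (2 / (m - 2)) := by ring
  have hpow : |u x y z ^ (4 / (m - 2)) - u₀ y ^ (4 / (m - 2))| ≤ K * (Cexp * x) :=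
    calc _ ≤ K * |u x y z - u₀ y| := hK.dist_le_mul _ (hu x hx y z) _ (hu₀ y)
      _ ≤ K * (Cexp * x) := mul_le_mul_of_nonneg_left (hexp x hx y z) K.2
  rw [hp, rescaled_edge_form_eq (hc₁.trans_le (hu₀ y).1).le, ← hp, ← sub_mul, abs_mul]
  calc _ ≤ K * (Cexp * x) * (vx ^ 2 + qB + qF) :=
        mul_le_mul hpow (edge_form_le hx hqB hqF) (abs_nonneg _) ((abs_nonneg _).trans hpow)
    _ = K * Cexp * x * (vx ^ 2 + qB + qF) := by ring

/-- Invariance of the edge structure under conformal transformation: if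
`u(x,y,z) = u₀(y) + O(x)` with `u, u₀` bounded between positive constants, then,
evaluating the metrics on tangent data `(vx, qB, qF)` (with `qB = g^B(v,v) ≥ 0`,
`qF = g^F(v,v) ≥ 0`), the conformally transformed metric
`u^{4/(m−2)}(dx² + φ*g^B + x² g^F)` agrees, after the change of radial variable
`x̃ = u₀^{2/(m−2)} x`, with `dx̃² + φ*(u₀^{4/(m−2)} g^B) + x̃² g^F` up to `O(x)`. -/
theorem stmt_19 {B F : Type*} (m : ℝ) (hm : 3 ≤ m)
    (u₀ : B → ℝ) (u : ℝ → B → F → ℝ) (c₁ c₂ : ℝ) (hc₁ : 0 < c₁)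
    (hu₀ : ∀ y, c₁ ≤ u₀ y ∧ u₀ y ≤ c₂)
    (hu : ∀ x ∈ Set.Icc (0:ℝ) 1, ∀ y z, c₁ ≤ u x y z ∧ u x y z ≤ c₂)
    (Cexp : ℝ)
    (hexp : ∀ x ∈ Set.Icc (0:ℝ) 1, ∀ y z, |u x y z - u₀ y| ≤ Cexp * x) :
    ∃ C' : ℝ, ∀ x ∈ Set.Icc (0:ℝ) 1, ∀ y z, ∀ vx qB qF : ℝ,
      0 ≤ qB → 0 ≤ qF →
      |u x y z ^ (4 / (m - 2)) * (vx ^ 2 + qB + x ^ 2 * qF) -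
        ((u₀ y ^ (2 / (m - 2)) * vx) ^ 2 + u₀ y ^ (4 / (m - 2)) * qB +
          (u₀ y ^ (2 / (m - 2)) * x) ^ 2 * qF)| ≤
        C' * x * (vx ^ 2 + qB + qF) :=
  stmt_19_general m u₀ u c₁ c₂ hc₁ hu₀ hu Cexp hexp
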